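/- Let 𝔤 be the vector space with basis {Ψ_i : i ≥ 2} over ℝ, and for a fixed nonzero real λ define a bilinear antisymmetric bracket by {Ψ_i, Ψ_j} = (j−i)(Ψ_{i+j} + λ^{-1}Ψ_{i+j−1}) − (j−1)(Ψ_{j+1} + λ^{-1}Ψ_j) + (i−1)(Ψ_{i+1} + λ^{-1}Ψ_i) for j > i ≥ 2 (extended by antisymmetry). Then this bracket satisfies the Jacobi identity, making 𝔤 a Lie algebra. -/

import Mathlib

open Finsupp

/-- Structure constants of the bracket `{Ψ_i, Ψ_j}` for `i < j`:
`(j−i)(Ψ_{i+j} + λ⁻¹Ψ_{i+j−1}) − (j−1)(Ψ_{j+1} + λ⁻¹Ψ_j) + (i−1)(Ψ_{i+1} + λ⁻¹Ψ_i)`. -/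
noncomputable def psiB0 (lam : ℝ) (i j : ℕ) : ℕ →₀ ℝ :=
  ((j : ℝ) - i) • (Finsupp.single (i + j) (1 : ℝ) + lam⁻¹ • Finsupp.single (i + j - 1) (1 : ℝ))
  - ((j : ℝ) - 1) • (Finsupp.single (j + 1) (1 : ℝ) + lam⁻¹ • Finsupp.single j (1 : ℝ))
  + ((i : ℝ) - 1) • (Finsupp.single (i + 1) (1 : ℝ) + lam⁻¹ • Finsupp.single i (1 : ℝ))

/-- Bracket on basis elements, extended antisymmetrically. -/
noncomputable def psiB (lam : ℝ) (i j : ℕ) : ℕ →₀ ℝ :=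
  if i < j then psiB0 lam i j else if j < i then -psiB0 lam j i else 0

/-- Bilinear extension of the bracket to the free module with basis `{Ψ_i}`. -/
noncomputable def psiBr (lam : ℝ) (f g : ℕ →₀ ℝ) : ℕ →₀ ℝ :=
  f.sum fun i a => g.sum fun j b => (a * b) • psiB lam i j

/-! The linear map `Ψ_m ↦ x^m - x` carries `{·,·}` to the weighted Wronskian bracket
`{p, q} = (x + λ⁻¹)(p q' - p' q)` on `ℝ[x]`. It is injective on the span of the `Ψ_i`, `i ≥ 2`,
since there the coefficient of `x^n`, `n ≥ 2`, is the coefficient of `Ψ_n`; that span is closed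
under the bracket, so the Jacobi identity pulls back from `ℝ[x]`. There it holds for any
weight `w`: `p ↦ p w ∂ₓ` carries `w (p q' - p' q)` to the commutator of vector fields, as
`[p w ∂ₓ, q w ∂ₓ] = w² (p q' - p' q) ∂ₓ`. -/

open Polynomial

namespace Polynomial

variable {R : Type*} [CommRing R]

noncomputable def weightedWronskianBilin (w : R[X]) : R[X] →ₗ[R] R[X] →ₗ[R] R[X] :=
  (wronskianBilin R).compr₂ (LinearMap.mulLeft R w)

theorem weightedWronskianBilin_apply (w a b : R[X]) :
    weightedWronskianBilin w a b = w * wronskian a b := rfl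

theorem weightedWronskianBilin_jacobi (w p q r : R[X]) :
    weightedWronskianBilin w p (weightedWronskianBilin w q r)
      + weightedWronskianBilin w q (weightedWronskianBilin w r p)
      + weightedWronskianBilin w r (weightedWronskianBilin w p q) = 0 := by
  simp only [weightedWronskianBilin_apply, wronskian, derivative_mul, derivative_sub]
  ring

end Polynomial

/-- The span of the `Ψ_i = single i 1` with `i ≥ 2`. -/
local notation "𝔤" => Finsupp.supported ℝ ℝ (Set.Ici 2)

noncomputable def psiPoly : (ℕ →₀ ℝ) →ₗ[ℝ] ℝ[X] := Finsupp.linearCombination ℝ fun m => X ^ m - X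

theorem psiPoly_apply (f : ℕ →₀ ℝ) : psiPoly f = f.sum fun m a => a • (X ^ m - X) :=
  Finsupp.linearCombination_apply ℝ f

theorem psiPoly_single (m : ℕ) : psiPoly (Finsupp.single m 1) = X ^ m - X := by
  simp [psiPoly]

theorem coeff_psiPoly {f : ℕ →₀ ℝ} {n : ℕ} (hn : 2 ≤ n) : (psiPoly f).coeff n = f n := by
  have hn1 : (1 : ℕ) ≠ n := by omega
  simp only [psiPoly_apply, Finsupp.sum, finsetSum_coeff, coeff_smul, coeff_sub, coeff_X_pow,
    coeff_X, hn1, if_false, sub_zero, smul_eq_mul, mul_ite, mul_one, mul_zero, Finset.sum_ite_eq,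
    Finsupp.if_mem_support]

theorem eq_zero_of_psiPoly_eq_zero {f : ℕ →₀ ℝ} (hf : f ∈ 𝔤) (h : psiPoly f = 0) : f = 0 := by
  ext n
  by_cases hn : 2 ≤ n
  · rw [← coeff_psiPoly hn, h, coeff_zero, Finsupp.coe_zero, Pi.zero_apply]
  · exact Finsupp.notMem_support_iff.mp fun hmem => hn ((Finsupp.mem_supported _ _).mp hf hmem)

theorem psiPoly_psiB0 (lam : ℝ) {i j : ℕ} (hij : i < j) :
    psiPoly (psiB0 lam i j) = weightedWronskianBilin (X + C lam⁻¹) (X ^ i - X) (X ^ j - X) := by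
  obtain ⟨b, rfl⟩ := Nat.exists_eq_add_of_lt hij
  rw [weightedWronskianBilin_apply, wronskian]
  rcases i with _ | a <;>
  simp only [psiB0, map_add, map_sub, map_smul, psiPoly_single, derivative_X_pow, derivative_X,
    derivative_one, smul_eq_C_mul, Nat.add_sub_cancel, Nat.add_succ_sub_one, zero_add,
    Nat.cast_add, Nat.cast_one, Nat.cast_zero, pow_zero, C_0, C_1] <;>
  ring

theorem psiPoly_psiB (lam : ℝ) (i j : ℕ) :
    psiPoly (psiB lam i j) = weightedWronskianBilin (X + C lam⁻¹) (X ^ i - X) (X ^ j - X) := by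
  rcases lt_trichotomy i j with h | rfl | h
  · rw [psiB, if_pos h, psiPoly_psiB0 lam h]
  · rw [psiB, if_neg (lt_irrefl i), if_neg (lt_irrefl i), map_zero,
      weightedWronskianBilin_apply, wronskian_self_eq_zero, mul_zero]
  · rw [psiB, if_neg h.not_gt, if_pos h, map_neg, psiPoly_psiB0 lam h,
      weightedWronskianBilin_apply, weightedWronskianBilin_apply, ← wronskian_neg_eq, mul_neg,
      neg_neg]

theorem psiPoly_psiBr (lam : ℝ) (f g : ℕ →₀ ℝ) :
    psiPoly (psiBr lam f g) = weightedWronskianBilin (X + C lam⁻¹) (psiPoly f) (psiPoly g) := by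
  rw [psiBr, map_finsuppSum, psiPoly_apply f, map_finsuppSum, LinearMap.finsupp_sum_apply]
  refine Finsupp.sum_congr fun i _ => ?_
  rw [map_finsuppSum, map_smul, LinearMap.smul_apply, psiPoly_apply g, map_finsuppSum,
    Finsupp.smul_sum]
  refine Finsupp.sum_congr fun j _ => ?_
  rw [map_smul, map_smul, psiPoly_psiB, mul_smul]

theorem psiB0_mem_supported (lam : ℝ) {i j : ℕ} (hi : 2 ≤ i) (hj : 2 ≤ j) : psiB0 lam i j ∈ 𝔤 := by
  unfold psiB0
  apply_rules [add_mem, sub_mem, Submodule.smul_mem, Finsupp.single_mem_supported] <;>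
    simp only [Set.mem_Ici] <;> omega

theorem psiB_mem_supported (lam : ℝ) {i j : ℕ} (hi : 2 ≤ i) (hj : 2 ≤ j) : psiB lam i j ∈ 𝔤 := by
  unfold psiB
  split_ifs
  · exact psiB0_mem_supported lam hi hj
  · exact neg_mem (psiB0_mem_supported lam hj hi)
  · exact zero_mem _

theorem psiBr_mem_supported (lam : ℝ) {f g : ℕ →₀ ℝ} (hf : f ∈ 𝔤) (hg : g ∈ 𝔤) :
    psiBr lam f g ∈ 𝔤 :=
  Submodule.finsuppSum_mem _ _ _ _ fun _ hi => Submodule.finsuppSum_mem _ _ _ _ fun _ hj =>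
    Submodule.smul_mem _ _ <| psiB_mem_supported lam
      ((Finsupp.mem_supported _ _).mp hf (Finsupp.mem_support_iff.mpr hi))
      ((Finsupp.mem_supported _ _).mp hg (Finsupp.mem_support_iff.mpr hj))

theorem psiBr_jacobi (lam : ℝ) {f g h : ℕ →₀ ℝ} (hf : f ∈ 𝔤) (hg : g ∈ 𝔤) (hh : h ∈ 𝔤) :
    psiBr lam f (psiBr lam g h) + psiBr lam g (psiBr lam h f) + psiBr lam h (psiBr lam f g) = 0 := by
  apply eq_zero_of_psiPoly_eq_zero
  · apply_rules [add_mem, psiBr_mem_supported]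
  · simp only [map_add, psiPoly_psiBr]
    exact weightedWronskianBilin_jacobi _ _ _ _

theorem psi_bracket_jacobi_general (lam : ℝ) :
    ∀ i j k : ℕ, 2 ≤ i → 2 ≤ j → 2 ≤ k →
      psiBr lam (Finsupp.single i 1) (psiBr lam (Finsupp.single j 1) (Finsupp.single k 1))
      + psiBr lam (Finsupp.single j 1) (psiBr lam (Finsupp.single k 1) (Finsupp.single i 1))
      + psiBr lam (Finsupp.single k 1) (psiBr lam (Finsupp.single i 1) (Finsupp.single j 1))
      = 0 := by
  intro i j k hi hj hk
  have hΨ : ∀ {m : ℕ}, 2 ≤ m → Finsupp.single m (1 : ℝ) ∈ 𝔤 :=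
    Finsupp.single_mem_supported ℝ 1
  exact psiBr_jacobi lam (hΨ hi) (hΨ hj) (hΨ hk)

/-- the bracket `{Ψ_i, Ψ_j}` satisfies the Jacobi identity on the
generators `Ψ_i`, `i ≥ 2`, making the free module with basis `{Ψ_i : i ≥ 2}`
a Lie algebra. -/
theorem psi_bracket_jacobi (lam : ℝ) (hlam : lam ≠ 0) :
    ∀ i j k : ℕ, 2 ≤ i → 2 ≤ j → 2 ≤ k →
      psiBr lam (Finsupp.single i 1) (psiBr lam (Finsupp.single j 1) (Finsupp.single k 1))
      + psiBr lam (Finsupp.single j 1) (psiBr lam (Finsupp.single k 1) (Finsupp.single i 1))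
      + psiBr lam (Finsupp.single k 1) (psiBr lam (Finsupp.single i 1) (Finsupp.single j 1))
      = 0 :=
  psi_bracket_jacobi_general lam
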